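/- arXiv:2301.08369 — 2 statements merged into one kernel-verified Lean document; each statement's English description precedes it below -/
import Mathlib

section
/- (Soldering) Let x be an eigenvector of L(G) for an eigenvalue λ, and let i, j be distinct non-adjacent vertices with x_i = x_j = 0 that have no common neighbor. Let G' be the graph obtained from G by contracting i and j, i.e., G' has vertex set V(G) \ {j}, and the merged vertex i is adjacent in G' exactly to the union of the G-neighbors of i and of j, all other adjacencies being unchanged. Then the vector x' obtained from x by deleting the j-th component is an eigenvector of L(G') for λ. -/
open Matrix Finset

/-- The Laplacian matrix of a finite simple graph: degree on the diagonal,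
`-1` at entries corresponding to edges, `0` elsewhere. -/
def lap {V : Type*} [Fintype V] [DecidableEq V] (G : SimpleGraph V) [DecidableRel G.Adj] :
    Matrix V V ℝ :=
  Matrix.of fun v w => if v = w then (G.degree v : ℝ) else if G.Adj v w then -1 else 0

lemma lap_mulVec {V : Type*} [Fintype V] [DecidableEq V] (G : SimpleGraph V)
    [DecidableRel G.Adj] (x : V → ℝ) (v : V) :
    (lap G *ᵥ x) v = ∑ w, (if G.Adj v w then x v - x w else 0) := by
  have h1 : (lap G *ᵥ x) v
      = ∑ w, (if v = w then (G.degree v : ℝ) else if G.Adj v w then -1 else 0) * x w := rfl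
  rw [h1]
  have h2 : ∀ w, (if v = w then (G.degree v : ℝ) else if G.Adj v w then -1 else 0) * x w
      = (if v = w then (G.degree v : ℝ) * x v else 0) + (if G.Adj v w then -x w else 0) := by
    intro w
    by_cases h : v = w
    · subst h; simp [G.irrefl]
    · by_cases h2 : G.Adj v w <;> simp [h, h2]
  rw [Finset.sum_congr rfl (fun w _ => h2 w), Finset.sum_add_distrib,
    Finset.sum_ite_eq univ v (fun _ => (G.degree v : ℝ) * x v)]
  have h3 : ∀ w, (if G.Adj v w then x v - x w else 0)
      = (if G.Adj v w then x v else 0) + (if G.Adj v w then -x w else 0) := by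
    intro w; by_cases h : G.Adj v w <;> simp [h, sub_eq_add_neg]
  rw [Finset.sum_congr rfl (fun w _ => h3 w), Finset.sum_add_distrib]
  have h4 : ∑ w, (if G.Adj v w then x v else 0) = (G.degree v : ℝ) * x v := by
    rw [← Finset.sum_filter, ← SimpleGraph.neighborFinset_eq_filter, Finset.sum_const,
      SimpleGraph.card_neighborFinset_eq_degree, nsmul_eq_mul]
  rw [h4]
  simp

/-- (Soldering) Contracting two non-adjacent soft nodes `i, j` (with no common neighbor)
of an eigenvector `x` preserves the eigenvalue; the contracted graph lives on `V \ {j}`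
and the merged vertex `i` is adjacent to the union of the old neighbors of `i` and `j`. -/
theorem soldering_preserves_eigenvalue {V : Type*} [Fintype V] [DecidableEq V]
    (G : SimpleGraph V) [DecidableRel G.Adj] (lam : ℝ) (x : V → ℝ) (hx : x ≠ 0)
    (heig : lap G *ᵥ x = lam • x) (i j : V) (hij : i ≠ j) (hnadj : ¬ G.Adj i j)
    (hcommon : ∀ v, ¬ (G.Adj i v ∧ G.Adj j v)) (hxi : x i = 0) (hxj : x j = 0)
    (G' : SimpleGraph {v : V // v ≠ j}) [DecidableRel G'.Adj]
    (hG' : ∀ a b : {v : V // v ≠ j}, G'.Adj a b ↔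
      (G.Adj a.1 b.1 ∨ (a.1 = i ∧ G.Adj j b.1) ∨ (b.1 = i ∧ G.Adj a.1 j))) :
    (fun v : {v : V // v ≠ j} => x v.1) ≠ 0 ∧
      lap G' *ᵥ (fun v : {v : V // v ≠ j} => x v.1) =
        lam • fun v : {v : V // v ≠ j} => x v.1 := by
  classical
  have key : ∀ u : V, ∑ w, (if G.Adj u w then x u - x w else 0) = lam * x u := by
    intro u
    rw [← lap_mulVec, heig]; rfl
  have hSi : ∑ w, (if G.Adj i w then x w else 0) = 0 := by
    have h1 := key i
    have h2 : ∑ w, (if G.Adj i w then x i - x w else 0)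
        = -∑ w, (if G.Adj i w then x w else 0) := by
      rw [← Finset.sum_neg_distrib]
      exact Finset.sum_congr rfl fun w _ => by by_cases h : G.Adj i w <;> simp [h, hxi]
    rw [h2, hxi, mul_zero] at h1
    linarith
  have hSj : ∑ w, (if G.Adj j w then x w else 0) = 0 := by
    have h1 := key j
    have h2 : ∑ w, (if G.Adj j w then x j - x w else 0)
        = -∑ w, (if G.Adj j w then x w else 0) := by
      rw [← Finset.sum_neg_distrib]
      exact Finset.sum_congr rfl fun w _ => by by_cases h : G.Adj j w <;> simp [h, hxj]
    rw [h2, hxj, mul_zero] at h1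
    linarith
  constructor
  · intro h
    apply hx
    funext v
    by_cases hv : v = j
    · rw [hv]; exact hxj
    · exact congrFun h ⟨v, hv⟩
  · funext v
    rw [lap_mulVec]
    set g : V → ℝ := fun w =>
      if (G.Adj v.1 w ∨ (v.1 = i ∧ G.Adj j w) ∨ (w = i ∧ G.Adj v.1 j)) then x v.1 - x w else 0
      with hg
    have hsub : ∑ w : {v : V // v ≠ j}, (if G'.Adj v w then x v.1 - x w.1 else 0)
        = ∑ w ∈ univ.erase j, g w := by
      rw [Finset.sum_subtype (p := fun w : V => w ≠ j) (univ.erase j) (fun w => by simp) g]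
      refine Finset.sum_congr rfl fun w _ => ?_
      simp only [hg, hG']
    have herase : ∑ w ∈ univ.erase j, g w = (∑ w, g w) - g j := by
      rw [← Finset.add_sum_erase univ g (Finset.mem_univ j)]; ring
    rw [hsub, herase]
    have hrhs : (lam • fun v : {v : V // v ≠ j} => x v.1) v = lam * x v.1 := rfl
    rw [hrhs]
    by_cases hvi : v.1 = i
    · -- merged vertex
      have hgw : ∀ w, g w = -(if G.Adj i w then x w else 0) - (if G.Adj j w then x w else 0) := by
        intro w
        simp only [hg]
        simp only [hvi, hxi]
        rcases Classical.em (G.Adj i w) with h1 | h1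
        · have h2 : ¬ G.Adj j w := fun h2 => hcommon w ⟨h1, h2⟩
          have h3 : ¬ (w = i ∧ G.Adj i j) := fun h3 => hnadj h3.2
          simp [h1, h2, h3]
        · rcases Classical.em (G.Adj j w) with h2 | h2
          · have h3 : ¬ (w = i ∧ G.Adj i j) := fun h3 => hnadj h3.2
            simp [h1, h2, h3]
          · have h3 : ¬ (w = i ∧ G.Adj i j) := fun h3 => hnadj h3.2
            simp [h1, h2, h3]
      have hsum : ∑ w, g w = 0 := by
        rw [Finset.sum_congr rfl fun w _ => hgw w, Finset.sum_sub_distrib,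
          Finset.sum_neg_distrib, hSi, hSj]
        ring
      have hgj : g j = 0 := by
        rw [hgw j]
        simp [hnadj, G.irrefl]
      rw [hsum, hgj, hvi, hxi]
      ring
    · -- other vertices
      have hgw : ∀ w, g w = (if G.Adj v.1 w then x v.1 - x w else 0)
          + (if w = i ∧ G.Adj v.1 j then x v.1 - x w else 0) := by
        intro w
        simp only [hg]
        rcases Classical.em (w = i ∧ G.Adj v.1 j) with ⟨rfl, hj2⟩ | h1
        · have h2 : ¬ G.Adj v.1 w := fun h2 => hcommon v.1 ⟨h2.symm, hj2.symm⟩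
          simp [h2, hj2, hvi]
        · rcases Classical.em (G.Adj v.1 w) with h2 | h2 <;> simp [h1, h2, hvi]
      have hsum2 : ∑ w, (if w = i ∧ G.Adj v.1 j then x v.1 - x w else 0)
          = if G.Adj v.1 j then x v.1 else 0 := by
        by_cases h : G.Adj v.1 j
        · simp only [h, and_true]
          rw [Finset.sum_ite_eq' univ i (fun w => x v.1 - x w)]
          simp [hxi]
        · simp [h]
      have hsum : ∑ w, g w = lam * x v.1 + (if G.Adj v.1 j then x v.1 else 0) := by
        rw [Finset.sum_congr rfl fun w _ => hgw w, Finset.sum_add_distrib, key, hsum2]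
      have hgj : g j = if G.Adj v.1 j then x v.1 else 0 := by
        simp only [hg]
        have h3 : ¬ (j = i) := fun h => hij h.symm
        by_cases h : G.Adj v.1 j <;> simp [h, hvi, h3, hxj]
      rw [hsum, hgj]
      ring
end

section
/- Let n = 2^α for a positive integer α, and let P_n be the path graph on vertices 1, …, n. Then no eigenvector of L(P_n) has a zero component; that is, the path on 2^α vertices has no soft node. (Equivalently, for all integers k, j with 1 ≤ k, j ≤ n, cos( π(k−1)(2j−1) / (2n) ) ≠ 0, since every eigenvalue of L(P_n) is simple with eigenvector v^k_j = cos( π(k−1)(2j−1)/(2n) ).) -/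
/-!
Extend an eigenvector `x` (eigenvalue `μ`) of the Laplacian of `P_n` to `u : ℤ → ℝ` by reflecting
in the half-integers `-1/2` and `n - 1/2`. Then `u` is `2n`-periodic, symmetric about `-1/2`, and
satisfies `u (i - 1) + u (i + 1) = (2 - μ) u i` on all of `ℤ`. If `u j = 0`, the recurrence makes
`u` antisymmetric about `j`, so composing the two reflections makes `u` antiperiodic with odd
period `2j + 1`. When `2j + 1` is coprime to `n`, as it always is for `n = 2^α`, Bézout turns the
periods `2(2j + 1)` and `2n` into the period `2`, hence antiperiod `1`, which together with
`u (-1) = u 0` forces `u = 0`. The same coprimality gives `n ∣ k` whenever `cos (π k (2j+1) / 2n)`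
vanishes.
-/

open Matrix

/-- The path (chain) graph on `n` vertices `0, 1, …, n-1`, with edges between
consecutive integers. -/
def pathGraph (n : ℕ) : SimpleGraph (Fin n) where
  Adj a b := (a : ℕ) + 1 = b ∨ (b : ℕ) + 1 = a
  symm := ⟨fun _ _ h => Or.symm h⟩
  loopless := ⟨fun a h => by rcases h with h | h <;> omega⟩

instance (n : ℕ) : DecidableRel (pathGraph n).Adj := fun a b =>
  inferInstanceAs (Decidable (_ ∨ _))

theorem lap_eq_lapMatrix {V : Type*} [Fintype V] [DecidableEq V] (G : SimpleGraph V)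
    [DecidableRel G.Adj] : lap G = G.lapMatrix ℝ := by
  ext v w
  by_cases h : v = w
  · subst h; simp [lap, SimpleGraph.lapMatrix, SimpleGraph.degMatrix]
  · by_cases hvw : G.Adj v w <;> simp [lap, SimpleGraph.lapMatrix, SimpleGraph.degMatrix, h, hvw]

theorem lap_mulVec_apply {V : Type*} [Fintype V] [DecidableEq V] (G : SimpleGraph V)
    [DecidableRel G.Adj] (x : V → ℝ) (v : V) :
    (lap G *ᵥ x) v = ∑ w ∈ G.neighborFinset v, (x v - x w) := by
  rw [lap_eq_lapMatrix, SimpleGraph.lapMatrix_mulVec_apply, Finset.sum_sub_distrib,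
    Finset.sum_const, SimpleGraph.card_neighborFinset_eq_degree, nsmul_eq_mul]

theorem Int.add_one_emod_cases (i : ℤ) {m : ℤ} (hm : 0 < m) :
    (i % m + 1 < m ∧ (i + 1) % m = i % m + 1) ∨ (i % m + 1 = m ∧ (i + 1) % m = 0) := by
  rw [← Int.emod_add_emod]
  have := Int.emod_lt_of_pos i hm
  rcases (show i % m + 1 < m ∨ i % m + 1 = m by omega) with h | h
  · exact .inl ⟨h, Int.emod_eq_of_lt (by have := Int.emod_nonneg i hm.ne'; omega) h⟩
  · exact .inr ⟨h, by rw [h, Int.emod_self]⟩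

theorem two_mul_natCast_pos (n : ℕ) [NeZero n] : (0 : ℤ) < 2 * n := by
  have := NeZero.pos n
  omega

section PathFold

variable (n : ℕ) [NeZero n]

/-- Folds `ℤ` onto `P_n` by reflecting in `-1/2` and `n - 1/2`, so that `x ∘ pathFold n` is the
reflected extension of a vector `x` on the vertices. -/
def pathFold (i : ℤ) : Fin n :=
  ⟨(min (i % (2 * n)) (2 * n - 1 - i % (2 * n))).toNat, by
    have := NeZero.pos n
    have := Int.emod_nonneg i (show (2 * n : ℤ) ≠ 0 by omega)
    omega⟩

variable {n}

theorem pathFold_val (i : ℤ) :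
    (pathFold n i : ℕ) = (min (i % (2 * n)) (2 * n - 1 - i % (2 * n))).toNat := rfl

theorem pathFold_natCast (v : Fin n) : pathFold n (v : ℕ) = v := by
  ext
  rw [pathFold_val, Int.emod_eq_of_lt (by omega) (by omega)]
  omega

theorem pathFold_add_two_mul (i : ℤ) : pathFold n (i + 2 * n) = pathFold n i := by
  simp only [pathFold, Int.add_emod_right]

theorem pathFold_neg_one_sub (i : ℤ) : pathFold n (-1 - i) = pathFold n i := by
  have h := Int.emod_add_mul_ediv i (2 * n)
  have := Int.emod_nonneg i (two_mul_natCast_pos n).ne'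
  have := Int.emod_lt_of_pos i (two_mul_natCast_pos n)
  have hq : 2 * n - 1 - i % (2 * n) + 2 * n * (-(i / (2 * n)) - 1) = -1 - i := by
    linear_combination -h
  have hrefl : (-1 - i) % (2 * n) = 2 * n - 1 - i % (2 * n) :=
    ((Int.ediv_emod_unique (two_mul_natCast_pos n)).mpr ⟨hq, by omega, by omega⟩).2
  ext
  rw [pathFold_val, pathFold_val, hrefl]
  omega

-- The truncated `v - 1` and `min (v + 1) (n - 1)` are the bounces at the two ends of the path.
theorem pathFold_sub_one_add_one (i : ℤ) :
    let v := (pathFold n i : ℕ)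
    ((pathFold n (i - 1) : ℕ) = v - 1 ∧ (pathFold n (i + 1) : ℕ) = min (v + 1) (n - 1)) ∨
      ((pathFold n (i - 1) : ℕ) = min (v + 1) (n - 1) ∧ (pathFold n (i + 1) : ℕ) = v - 1) := by
  have hsucc := Int.add_one_emod_cases i (two_mul_natCast_pos n)
  have hpred := Int.add_one_emod_cases (i - 1) (two_mul_natCast_pos n)
  rw [sub_add_cancel] at hpred
  have := Int.emod_nonneg (i - 1) (two_mul_natCast_pos n).ne'
  have := Int.emod_nonneg i (two_mul_natCast_pos n).ne'
  simp only [pathFold_val]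
  omega

theorem pathGraph_adj_pathFold_iff (i : ℤ) (w : Fin n) :
    (pathGraph n).Adj (pathFold n i) w ↔
      w ≠ pathFold n i ∧ (w = pathFold n (i - 1) ∨ w = pathFold n (i + 1)) := by
  have := pathFold_sub_one_add_one (n := n) i
  have := w.isLt
  simp only [pathGraph, ne_eq, Fin.ext_iff]
  omega

theorem pathFold_sub_one_eq_add_one {i : ℤ} (h : pathFold n (i - 1) = pathFold n (i + 1)) :
    pathFold n (i - 1) = pathFold n i := by
  have := pathFold_sub_one_add_one (n := n) i
  have := (pathFold n i).isLt
  simp only [Fin.ext_iff] at h ⊢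
  omega

end PathFold

theorem lap_pathGraph_mulVec_pathFold {n : ℕ} [NeZero n] (x : Fin n → ℝ) (i : ℤ) :
    (lap (pathGraph n) *ᵥ x) (pathFold n i) =
      (x (pathFold n i) - x (pathFold n (i - 1))) +
        (x (pathFold n i) - x (pathFold n (i + 1))) := by
  have hnbr : (pathGraph n).neighborFinset (pathFold n i) =
      ({pathFold n (i - 1), pathFold n (i + 1)} : Finset (Fin n)).erase (pathFold n i) := by
    ext w
    rw [SimpleGraph.mem_neighborFinset, pathGraph_adj_pathFold_iff]
    simp
  rw [lap_mulVec_apply, hnbr, Finset.sum_erase _ (sub_self _)]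
  by_cases h : pathFold n (i - 1) = pathFold n (i + 1)
  · rw [← h, pathFold_sub_one_eq_add_one h]
    simp
  · exact Finset.sum_pair h

section Recurrence

variable {R : Type*} [CommRing R] {u : ℤ → R} {c : R}

theorem eq_zero_of_recurrence (hu : ∀ i, u (i - 1) + u (i + 1) = c * u i)
    (h₀ : u 0 = 0) (h₁ : u 1 = 0) : u = 0 := by
  suffices ∀ i, u i = 0 ∧ u (i + 1) = 0 from funext fun i => (this i).1
  intro i
  induction i using Int.induction_on with
  | zero => exact ⟨h₀, h₁⟩
  | succ i ih =>
    have := hu (i + 1)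
    rw [add_sub_cancel_right, ih.1, ih.2, mul_zero, zero_add] at this
    exact ⟨ih.2, this⟩
  | pred i ih =>
    have := hu (-i)
    rw [ih.1, ih.2, mul_zero, add_zero] at this
    exact ⟨this, by rw [sub_add_cancel]; exact ih.1⟩

theorem recurrence_antisymm_of_eq_zero (hu : ∀ i, u (i - 1) + u (i + 1) = c * u i) {j : ℤ}
    (hj : u j = 0) (i : ℤ) : u (j + i) = -u (j - i) := by
  set w : ℤ → R := fun i => u (j + i) + u (j - i)
  have hw : ∀ i, w (i - 1) + w (i + 1) = c * w i := fun i => by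
    simp only [w, show j + (i - 1) = j + i - 1 by ring, show j - (i - 1) = j - i + 1 by ring,
      show j + (i + 1) = j + i + 1 by ring, show j - (i + 1) = j - i - 1 by ring]
    linear_combination hu (j + i) + hu (j - i)
  have hw0 : w = 0 := eq_zero_of_recurrence hw (by simp [w, hj])
    (by simpa [w, hj, add_comm] using hu j)
  exact eq_neg_of_add_eq_zero_left (congrFun hw0 i)

theorem antiperiodic_of_recurrence (hu : ∀ i, u (i - 1) + u (i + 1) = c * u i)
    (hsymm : ∀ i, u (-1 - i) = u i) {j : ℤ} (hj : u j = 0) :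
    Function.Antiperiodic u (2 * j + 1) := fun i => by
  rw [show i + (2 * j + 1) = j + (j + 1 + i) by ring, recurrence_antisymm_of_eq_zero hu hj,
    show j - (j + 1 + i) = -1 - i by ring, hsymm]

theorem eq_zero_of_recurrence_of_periodic [IsAddTorsionFree R]
    (hu : ∀ i, u (i - 1) + u (i + 1) = c * u i) (hsymm : ∀ i, u (-1 - i) = u i) {p : ℤ}
    (hper : Function.Periodic u (2 * p)) {j : ℤ} (hj : u j = 0) (hcop : IsCoprime (2 * j + 1) p) :
    u = 0 := by
  have hanti := antiperiodic_of_recurrence hu hsymm hj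
  obtain ⟨a, b, hab⟩ := hcop
  have hper2 : Function.Periodic u 2 := by
    have h := (hanti.periodic_two_mul.int_mul a).add_period (hper.int_mul b)
    rwa [Int.cast_id, Int.cast_id, show a * (2 * (2 * j + 1)) + b * (2 * p) = 2 by
      linear_combination 2 * hab] at h
  have hanti1 : Function.Antiperiodic u 1 := fun i => by
    rw [← hanti i, show i + (2 * j + 1) = i + 1 + j * 2 by ring]
    exact (hper2.int_mul j (i + 1)).symm
  have h₀ : u 0 = 0 := by
    have h := hanti1 (-1)
    have hsymm0 := hsymm 0
    rw [sub_zero] at hsymm0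
    rw [neg_add_cancel, hsymm0] at h
    exact self_eq_neg.mp h
  exact eq_zero_of_recurrence hu h₀ (by simpa [h₀] using hanti1 0)

end Recurrence

theorem eq_zero_of_lap_pathGraph_mulVec_eq_smul {n : ℕ} {μ : ℝ} {x : Fin n → ℝ}
    (hx : lap (pathGraph n) *ᵥ x = μ • x) {j : Fin n} (hj : x j = 0)
    (hcop : Nat.Coprime (2 * j + 1) n) : x = 0 := by
  have : NeZero n := ⟨j.pos.ne'⟩
  set u : ℤ → ℝ := x ∘ pathFold n
  have hu : ∀ i, u (i - 1) + u (i + 1) = (2 - μ) * u i := fun i => by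
    have h := congrFun hx (pathFold n i)
    rw [lap_pathGraph_mulVec_pathFold, Pi.smul_apply, smul_eq_mul] at h
    simp only [u, Function.comp_apply]
    linear_combination -h
  have hu0 : u = 0 :=
    eq_zero_of_recurrence_of_periodic hu (fun i => congrArg x (pathFold_neg_one_sub i))
      (fun i => congrArg x (pathFold_add_two_mul i)) (j := (j : ℕ))
      (by simpa [u, pathFold_natCast] using hj)
      (by exact_mod_cast Nat.isCoprime_iff_coprime.mpr hcop)
  funext v
  simpa [u, pathFold_natCast] using congrFun hu0 (v : ℕ)

theorem cos_pi_mul_mul_odd_div_ne_zero {n k j : ℕ} (hk : k < n)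
    (hcop : Nat.Coprime (2 * j + 1) n) :
    Real.cos (Real.pi * k * (2 * j + 1) / (2 * n)) ≠ 0 := by
  rw [Ne, Real.cos_eq_zero_iff]
  rintro ⟨m, hm⟩
  have hn : (n : ℝ) ≠ 0 := by exact_mod_cast (k.zero_le.trans_lt hk).ne'
  rw [div_eq_div_iff (by positivity) two_ne_zero] at hm
  have hkey : ((k * (2 * j + 1) : ℕ) : ℤ) = (2 * m + 1) * n := by
    have : (k : ℝ) * (2 * j + 1) = (2 * m + 1) * n :=
      mul_left_cancel₀ Real.pi_ne_zero (by linear_combination hm / 2)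
    exact_mod_cast this
  have hk0 : k = 0 := Nat.eq_zero_of_dvd_of_lt
    (hcop.symm.dvd_of_dvd_mul_right (Int.natCast_dvd_natCast.mp ⟨2 * m + 1, by rw [hkey]; ring⟩)) hk
  subst hk0
  have hodd : (2 * m + 1) * (n : ℤ) ≠ 0 := mul_ne_zero (by omega) (by exact_mod_cast hn)
  exact hodd (by simpa using hkey.symm)

theorem path_pow_two_no_soft_node_general (α : ℕ) (n : ℕ) (hn : n = 2 ^ α) :
    (∀ (μ : ℝ) (x : Fin n → ℝ), x ≠ 0 → lap (pathGraph n) *ᵥ x = μ • x →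
      ∀ j : Fin n, x j ≠ 0) ∧
    (∀ k j : Fin n,
      Real.cos (Real.pi * (k : ℕ) * (2 * (j : ℕ) + 1) / (2 * n)) ≠ 0) := by
  have hcop (j : ℕ) : Nat.Coprime (2 * j + 1) n :=
    hn ▸ Nat.Coprime.pow_right α (Nat.coprime_two_right.mpr (odd_two_mul_add_one j))
  exact ⟨fun μ x hx hμ j hj => hx (eq_zero_of_lap_pathGraph_mulVec_eq_smul hμ hj (hcop j)),
    fun k j => cos_pi_mul_mul_odd_div_ne_zero k.isLt (hcop j)⟩

/-- The path on `n = 2^α` vertices has no soft node: no eigenvector of its Laplacian has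
a zero component. Equivalently (0-indexed), `cos (π k (2j+1) / (2n)) ≠ 0` for all
`k, j ∈ {0, …, n-1}`. -/
theorem path_pow_two_no_soft_node (α : ℕ) (hα : 0 < α) (n : ℕ) (hn : n = 2 ^ α) :
    (∀ (μ : ℝ) (x : Fin n → ℝ), x ≠ 0 → lap (pathGraph n) *ᵥ x = μ • x →
      ∀ j : Fin n, x j ≠ 0) ∧
    (∀ k j : Fin n,
      Real.cos (Real.pi * (k : ℕ) * (2 * (j : ℕ) + 1) / (2 * n)) ≠ 0) :=
  path_pow_two_no_soft_node_general α n hn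
end
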